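/- arXiv:1905.01485 — 2 statements merged into one kernel-verified Lean document; each statement's English description precedes it below -/
import Mathlib

section
/- Let 𝔪 be an infinite σ-algebra on X and let ℛ ⊆ 𝔪 be nonempty with ∅ ∉ ℛ. Set ℛ↑ = {B ∈ 𝔪 : A ⊆ B for some A ∈ ℛ}. Then ℛ is partition regular if and only if for every A ∈ ℛ there is an 𝔪-ultrafilter p with A ∈ p ⊆ ℛ↑. -/
open Set

def IsMFilter {X : Type*} [MeasurableSpace X] (p : Set (Set X)) : Prop :=
  (∀ A ∈ p, MeasurableSet A) ∧ ∅ ∉ p ∧ Set.univ ∈ p ∧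
  (∀ A ∈ p, ∀ B : Set X, MeasurableSet B → A ⊆ B → B ∈ p) ∧
  (∀ A ∈ p, ∀ B ∈ p, A ∩ B ∈ p)

def IsMUltrafilter {X : Type*} [MeasurableSpace X] (p : Set (Set X)) : Prop :=
  IsMFilter p ∧ ∀ q : Set (Set X), IsMFilter q → p ⊆ q → q = p

def MUltra (X : Type*) [MeasurableSpace X] : Type _ :=
  {p : Set (Set X) // IsMUltrafilter p}

def hatSet {X : Type*} [MeasurableSpace X] (A : Set X) : Set (MUltra X) :=
  {p | A ∈ p.1}

instance {X : Type*} [MeasurableSpace X] : TopologicalSpace (MUltra X) :=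
  TopologicalSpace.generateFrom {U | ∃ A : Set X, MeasurableSet A ∧ U = hatSet A}

instance {X : Type*} [MeasurableSpace X] : MeasurableSpace (MUltra X) :=
  MeasurableSpace.generateFrom {U | ∃ A : Set X, MeasurableSet A ∧ U = hatSet A}

def principalUF {X : Type*} [MeasurableSpace X] (x : X) : Set (Set X) :=
  {A | MeasurableSet A ∧ x ∈ A}

theorem principalUF_ultra {X : Type*} [MeasurableSpace X] (x : X) :
    IsMUltrafilter (principalUF x) := by
  constructor
  · refine ⟨fun A hA => hA.1, ?_, ⟨MeasurableSet.univ, trivial⟩, ?_, ?_⟩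
    · intro h; exact h.2
    · intro A hA B hB hAB; exact ⟨hB, hAB hA.2⟩
    · intro A hA B hB; exact ⟨hA.1.inter hB.1, hA.2, hB.2⟩
  · intro q hq hpq
    refine Set.Subset.antisymm ?_ hpq
    intro A hAq
    have hAm : MeasurableSet A := hq.1 A hAq
    by_contra hx
    have hxc : x ∈ Aᶜ := fun h => hx ⟨hAm, h⟩
    have hcq : Aᶜ ∈ q := hpq ⟨hAm.compl, hxc⟩
    have hint : A ∩ Aᶜ ∈ q := hq.2.2.2.2 A hAq Aᶜ hcq
    rw [Set.inter_compl_self] at hint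
    exact hq.2.1 hint

def princ {X : Type*} [MeasurableSpace X] (x : X) : MUltra X :=
  ⟨principalUF x, principalUF_ultra x⟩


def extF {X : Type*} [MeasurableSpace X] (p : Set (Set X)) (B : Set X) :
    Set (Set X) := {D | MeasurableSet D ∧ ∃ E ∈ p, E ∩ B ⊆ D}

lemma extF_filter {X : Type*} [MeasurableSpace X] {p : Set (Set X)}
    (hp : IsMFilter p) {B : Set X} (hB : MeasurableSet B)
    (hne : ∀ E ∈ p, E ∩ B ≠ ∅) : IsMFilter (extF p B) := by
  obtain ⟨hm, he, hu, hup, hint⟩ := hp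
  refine ⟨fun D hD => hD.1, ?_, ⟨MeasurableSet.univ, Set.univ, hu, by simp⟩, ?_, ?_⟩
  · rintro ⟨_, E, hE, hEB⟩
    exact hne E hE (Set.subset_empty_iff.mp hEB)
  · rintro D ⟨hDm, E, hE, hEB⟩ D' hD'm hDD'
    exact ⟨hD'm, E, hE, hEB.trans hDD'⟩
  · rintro D ⟨hDm, E, hE, hEB⟩ D' ⟨hD'm, E', hE', hE'B⟩
    exact ⟨hDm.inter hD'm, E ∩ E', hint E hE E' hE', fun x hx =>
      ⟨hEB ⟨hx.1.1, hx.2⟩, hE'B ⟨hx.1.2, hx.2⟩⟩⟩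

lemma subset_extF {X : Type*} [MeasurableSpace X] {p : Set (Set X)}
    (hp : IsMFilter p) (B : Set X) : p ⊆ extF p B :=
  fun D hD => ⟨hp.1 D hD, D, hD, Set.inter_subset_left⟩

lemma mem_extF {X : Type*} [MeasurableSpace X] {p : Set (Set X)}
    (hp : IsMFilter p) {B : Set X} (hB : MeasurableSet B) : B ∈ extF p B :=
  ⟨hB, Set.univ, hp.2.2.1, by simp⟩

lemma ultra_dichotomy {X : Type*} [MeasurableSpace X] {p : Set (Set X)}
    (hp : IsMUltrafilter p) {A : Set X} (hA : MeasurableSet A) :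
    A ∈ p ∨ Aᶜ ∈ p := by
  by_cases h : ∃ E ∈ p, E ∩ A = ∅
  · obtain ⟨E, hE, hEA⟩ := h
    exact Or.inr (hp.1.2.2.2.1 E hE Aᶜ hA.compl
      (fun x hx hxA => Set.eq_empty_iff_forall_notMem.mp hEA x ⟨hx, hxA⟩))
  · push_neg at h
    have hq := extF_filter hp.1 hA (fun E hE => (h E hE).ne_empty)
    have := hp.2 _ hq (subset_extF hp.1 A)
    exact Or.inl (this ▸ mem_extF hp.1 hA)

lemma dichot_ultra {X : Type*} [MeasurableSpace X] {p : Set (Set X)}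
    (hp : IsMFilter p) (h : ∀ A : Set X, MeasurableSet A → A ∈ p ∨ Aᶜ ∈ p) :
    IsMUltrafilter p := by
  refine ⟨hp, fun q hq hpq => Set.Subset.antisymm (fun B hBq => ?_) hpq⟩
  rcases h B (hq.1 B hBq) with hB | hBc
  · exact hB
  · exfalso
    have : B ∩ Bᶜ ∈ q := hq.2.2.2.2 B hBq Bᶜ (hpq hBc)
    rw [Set.inter_compl_self] at this
    exact hq.2.1 this

theorem stmt5 {X : Type*} [MeasurableSpace X]
    (hinf : {A : Set X | MeasurableSet A}.Infinite)
    (R : Set (Set X)) (hRm : ∀ A ∈ R, MeasurableSet A)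
    (hRne : R.Nonempty) (hRe : ∅ ∉ R) :
    (∀ A B : Set X, MeasurableSet A → MeasurableSet B → A ∪ B ∈ R →
        ∃ C ∈ R, C ⊆ A ∨ C ⊆ B) ↔
      ∀ A ∈ R, ∃ p : Set (Set X), IsMUltrafilter p ∧ A ∈ p ∧
        p ⊆ {B : Set X | MeasurableSet B ∧ ∃ C ∈ R, C ⊆ B} := by
  constructor
  · -- partition regular → ultrafilter condition
    intro hpr A hA
    set Rup : Set (Set X) := {B : Set X | MeasurableSet B ∧ ∃ C ∈ R, C ⊆ B} with hRup
    set S : Set (Set (Set X)) := {q | IsMFilter q ∧ A ∈ q ∧ q ⊆ Rup} with hS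
    have hAm : MeasurableSet A := hRm A hA
    have hAne : A ≠ ∅ := fun h => hRe (h ▸ hA)
    have hp0 : {B : Set X | MeasurableSet B ∧ A ⊆ B} ∈ S := by
      refine ⟨⟨fun B hB => hB.1, fun h => hAne (Set.subset_empty_iff.mp h.2), 
        ⟨MeasurableSet.univ, Set.subset_univ A⟩, ?_, ?_⟩, ⟨hAm, Set.Subset.rfl⟩, ?_⟩
      · rintro B ⟨hBm, hAB⟩ B' hB'm hBB'
        exact ⟨hB'm, hAB.trans hBB'⟩
      · rintro B ⟨hBm, hAB⟩ B' ⟨hB'm, hAB'⟩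
        exact ⟨hBm.inter hB'm, Set.subset_inter hAB hAB'⟩
      · rintro B ⟨hBm, hAB⟩
        exact ⟨hBm, A, hA, hAB⟩
    have hzorn : ∀ c ⊆ S, IsChain (· ⊆ ·) c → c.Nonempty →
        ∃ ub ∈ S, ∀ s ∈ c, s ⊆ ub := by
      intro c hcS hchain hcne
      obtain ⟨q0, hq0⟩ := hcne
      refine ⟨⋃₀ c, ⟨⟨?_, ?_, ?_, ?_, ?_⟩, ?_, ?_⟩, fun s hs => Set.subset_sUnion_of_mem hs⟩
      · rintro B ⟨q, hq, hBq⟩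
        exact (hcS hq).1.1 B hBq
      · rintro ⟨q, hq, hEq⟩
        exact (hcS hq).1.2.1 hEq
      · exact ⟨q0, hq0, (hcS hq0).1.2.2.1⟩
      · rintro B ⟨q, hq, hBq⟩ B' hB'm hBB'
        exact ⟨q, hq, (hcS hq).1.2.2.2.1 B hBq B' hB'm hBB'⟩
      · rintro B ⟨q, hq, hBq⟩ B' ⟨q', hq', hB'q'⟩
        rcases hchain.total hq hq' with hle | hle
        · exact ⟨q', hq', (hcS hq').1.2.2.2.2 B (hle hBq) B' hB'q'⟩
        · exact ⟨q, hq, (hcS hq).1.2.2.2.2 B hBq B' (hle hB'q')⟩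
      · exact ⟨q0, hq0, (hcS hq0).2.1⟩
      · rintro B ⟨q, hq, hBq⟩
        exact (hcS hq).2.2 hBq
    obtain ⟨p, -, hpS, hpmax⟩ := zorn_subset_nonempty S hzorn _ hp0
    obtain ⟨hpf, hAp, hpR⟩ := hpS
    refine ⟨p, dichot_ultra hpf ?_, hAp, hpR⟩
    intro B hBm
    -- key step using partition regularity
    by_contra hcon
    push_neg at hcon
    obtain ⟨hB, hBc⟩ := hcon
    have key : ∀ B' : Set X, MeasurableSet B' → B' ∉ p → ∃ E ∈ p, E ∩ B' ∉ Rup := by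
      intro B' hB'm hB'p
      by_contra h
      push_neg at h
      have hne : ∀ E ∈ p, E ∩ B' ≠ ∅ := by
        intro E hE heq
        obtain ⟨-, C, hC, hCsub⟩ := h E hE
        rw [heq, Set.subset_empty_iff] at hCsub
        exact hRe (hCsub ▸ hC)
      have hqf := extF_filter hpf hB'm hne
      have hqS : extF p B' ∈ S := by
        refine ⟨hqf, subset_extF hpf B' hAp, ?_⟩
        rintro D ⟨hDm, E, hE, hEB⟩
        obtain ⟨-, C, hC, hCsub⟩ := h E hE
        exact ⟨hDm, C, hC, hCsub.trans hEB⟩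
      have := hpmax hqS (subset_extF hpf B')
      exact hB'p (this (mem_extF hpf hB'm))
    obtain ⟨E, hE, hEB⟩ := key B hBm hB
    obtain ⟨E', hE', hE'B⟩ := key Bᶜ hBm.compl hBc
    have hEE' : E ∩ E' ∈ p := hpf.2.2.2.2 E hE E' hE'
    obtain ⟨-, C, hC, hCsub⟩ := hpR hEE'
    have hCm : MeasurableSet C := hRm C hC
    have hCu : (C ∩ B) ∪ (C ∩ Bᶜ) ∈ R := by rwa [Set.inter_union_compl]
    obtain ⟨C', hC', hC'sub⟩ := hpr (C ∩ B) (C ∩ Bᶜ) (hCm.inter hBm) (hCm.inter hBm.compl) hCu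
    rcases hC'sub with h1 | h1
    · exact hEB ⟨((hpf.1 E hE).inter hBm), C', hC',
        h1.trans (Set.inter_subset_inter_left B (hCsub.trans Set.inter_subset_left))⟩
    · exact hE'B ⟨((hpf.1 E' hE').inter hBm.compl), C', hC',
        h1.trans (Set.inter_subset_inter_left Bᶜ (hCsub.trans Set.inter_subset_right))⟩
  · -- ultrafilter condition → partition regular
    intro h A B hAm hBm hAB
    obtain ⟨p, hp, hABp, hpR⟩ := h (A ∪ B) hAB
    rcases ultra_dichotomy hp hAm with hA | hAc
    · obtain ⟨-, C, hC, hCsub⟩ := hpR hA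
      exact ⟨C, hC, Or.inl hCsub⟩
    · have h1 : (A ∪ B) ∩ Aᶜ ∈ p := hp.1.2.2.2.2 _ hABp _ hAc
      have h2 : B ∈ p := hp.1.2.2.2.1 _ h1 B hBm (by
        rintro x ⟨hx1, hx2⟩
        rcases hx1 with h | h
        · exact absurd h hx2
        · exact h)
      obtain ⟨-, C, hC, hCsub⟩ := hpR h2
      exact ⟨C, hC, Or.inr hCsub⟩
end

section
/- Let (X, 𝔪) be a measurable space with all finite subsets in 𝔪 and X infinite. Let X* = 𝔪^β \ e(X) be the set of non-principal 𝔪-ultrafilters. Then every nonempty G_δ-subset of X* has nonempty interior in X*. -/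
open Set

/-!
Let `p ∈ G = ⋂ₙ Uₙ`. Each `Uₙ` contains a basic neighbourhood `Âₙ` of `p`, and the finite
intersections `Bₙ = A₀ ∩ ⋯ ∩ Aₙ` lie in `p`, so they are infinite because `p` is not principal.
A diagonal choice gives an infinite countable (hence measurable) `D` with every `D \ Bₙ` finite.
The measurable sets containing all but finitely many points of `D` form a filter, and any
ultrafilter extending it is non-principal, so `D̂ ∩ X*` is a nonempty open set; and a
non-principal ultrafilter containing `D` cannot contain the finite set `D \ Bₙ`, so it
contains every `Bₙ`, whence `D̂ ∩ X* ⊆ G`.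
-/

open Set Function Topology TopologicalSpace

namespace IsMFilter

variable {X : Type*} [MeasurableSpace X] {p : Set (Set X)} {A B : Set X}

theorem measurableSet (hp : IsMFilter p) (hA : A ∈ p) : MeasurableSet A := hp.1 A hA

theorem empty_notMem (hp : IsMFilter p) : ∅ ∉ p := hp.2.1

theorem univ_mem (hp : IsMFilter p) : univ ∈ p := hp.2.2.1

theorem mem_of_superset (hp : IsMFilter p) (hA : A ∈ p) (hB : MeasurableSet B) (hAB : A ⊆ B) :
    B ∈ p :=
  hp.2.2.2.1 A hA B hB hAB

theorem inter_mem (hp : IsMFilter p) (hA : A ∈ p) (hB : B ∈ p) : A ∩ B ∈ p :=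
  hp.2.2.2.2 A hA B hB

theorem nonempty_of_mem (hp : IsMFilter p) (hA : A ∈ p) : A.Nonempty :=
  nonempty_iff_ne_empty.2 fun h => hp.empty_notMem (h ▸ hA)

theorem inter_mem_iff (hp : IsMFilter p) (hA : MeasurableSet A) (hB : MeasurableSet B) :
    A ∩ B ∈ p ↔ A ∈ p ∧ B ∈ p :=
  ⟨fun h => ⟨hp.mem_of_superset h hA inter_subset_left, hp.mem_of_superset h hB inter_subset_right⟩,
    fun h => hp.inter_mem h.1 h.2⟩

theorem biInter_mem (hp : IsMFilter p) {ι : Type*} {s : Set ι} (hs : s.Finite) {A : ι → Set X}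
    (hA : ∀ i ∈ s, A i ∈ p) : ⋂ i ∈ s, A i ∈ p := by
  induction s, hs using Set.Finite.induction_on with
  | empty => simpa using hp.univ_mem
  | insert _ _ ih =>
    rw [biInter_insert]
    exact hp.inter_mem (hA _ (mem_insert _ _)) (ih fun i hi => hA i (mem_insert_of_mem _ hi))

theorem exists_isMUltrafilter_superset (hp : IsMFilter p) : ∃ q, IsMUltrafilter q ∧ p ⊆ q := by
  obtain ⟨m, hpm, hm, hmax⟩ := zorn_subset_nonempty {q : Set (Set X) | IsMFilter q}
    (fun c hc hchain ⟨q₀, hq₀⟩ => by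
      refine ⟨⋃₀ c, ⟨?_, ?_, ?_, ?_, ?_⟩, fun s hs => subset_sUnion_of_mem hs⟩
      · rintro A ⟨q, hq, hA⟩
        exact (hc hq).measurableSet hA
      · rintro ⟨q, hq, hA⟩
        exact (hc hq).empty_notMem hA
      · exact ⟨q₀, hq₀, (hc hq₀).univ_mem⟩
      · rintro A ⟨q, hq, hA⟩ B hB hAB
        exact ⟨q, hq, (hc hq).mem_of_superset hA hB hAB⟩
      · rintro A ⟨q, hq, hA⟩ B ⟨q', hq', hB⟩
        rcases hchain.total hq hq' with h | h
        · exact ⟨q', hq', (hc hq').inter_mem (h hA) hB⟩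
        · exact ⟨q, hq, (hc hq).inter_mem hA (h hB)⟩) p hp
  exact ⟨m, ⟨hm, fun q hq hmq => (hmax hq hmq).antisymm hmq⟩, hpm⟩

end IsMFilter

namespace IsMUltrafilter

variable {X : Type*} [MeasurableSpace X] {p : Set (Set X)} {A : Set X}

theorem mem_or_compl_mem (hp : IsMUltrafilter p) (hA : MeasurableSet A) : A ∈ p ∨ Aᶜ ∈ p := by
  refine or_iff_not_imp_right.2 fun hAc => ?_
  -- `A` lies in the filter `{B | Aᶜ ∪ B ∈ p}`, which contains `p` and is proper since `Aᶜ ∉ p`.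
  let q : Set (Set X) := {B | MeasurableSet B ∧ Aᶜ ∪ B ∈ p}
  have hq : IsMFilter q := by
    refine ⟨fun B hB => hB.1, fun h => hAc (by simpa using h.2), ⟨MeasurableSet.univ, by
      simpa using hp.1.univ_mem⟩, ?_, ?_⟩
    · rintro B ⟨-, hB⟩ C hC hBC
      exact ⟨hC, hp.1.mem_of_superset hB (hA.compl.union hC) (union_subset_union_right _ hBC)⟩
    · rintro B ⟨hBm, hB⟩ C ⟨hCm, hC⟩
      exact ⟨hBm.inter hCm, union_inter_distrib_left Aᶜ B C ▸ hp.1.inter_mem hB hC⟩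
  have hpq : p ⊆ q := fun B hB =>
    ⟨hp.1.measurableSet hB, hp.1.mem_of_superset hB (hA.compl.union (hp.1.measurableSet hB))
      subset_union_right⟩
  rw [← hp.2 q hq hpq]
  exact ⟨hA, by simpa using hp.1.univ_mem⟩

theorem eq_principalUF_of_singleton_mem (hp : IsMUltrafilter p) {x : X} (hx : {x} ∈ p) :
    p = principalUF x := by
  have hsub : p ⊆ principalUF x := fun A hA => by
    obtain ⟨y, hyA, rfl⟩ := hp.1.nonempty_of_mem (hp.1.inter_mem hA hx)
    exact ⟨hp.1.measurableSet hA, hyA⟩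
  exact (hp.2 _ (principalUF_ultra x).1 hsub).symm

theorem exists_eq_principalUF_of_finite_mem [MeasurableSingletonClass X]
    (hp : IsMUltrafilter p) {F : Set X} (hF : F.Finite) (hFp : F ∈ p) :
    ∃ x, p = principalUF x := by
  induction F, hF using Set.Finite.induction_on with
  | empty => exact absurd hFp hp.1.empty_notMem
  | @insert x s _ hs ih =>
    rcases hp.mem_or_compl_mem (measurableSet_singleton x) with hx | hx
    · exact ⟨x, hp.eq_principalUF_of_singleton_mem hx⟩
    · refine ih (hp.1.mem_of_superset (hp.1.inter_mem hFp hx) hs.measurableSet ?_)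
      rintro y ⟨hy | hy, hyx⟩
      exacts [absurd hy hyx, hy]

end IsMUltrafilter

section MUltra

variable {X : Type*} [MeasurableSpace X] {A B D : Set X}

theorem MUltra.infinite_of_mem [MeasurableSingletonClass X] {p : MUltra X}
    (hp : p ∉ range princ) (hA : A ∈ p.1) : A.Infinite := fun hfin => by
  obtain ⟨x, hx⟩ := p.2.exists_eq_principalUF_of_finite_mem hfin hA
  exact hp ⟨x, Subtype.ext hx.symm⟩

theorem hatSet_univ : hatSet (univ : Set X) = univ :=
  eq_univ_of_forall fun p => p.2.1.univ_mem

theorem hatSet_inter (hA : MeasurableSet A) (hB : MeasurableSet B) :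
    hatSet (A ∩ B) = hatSet A ∩ hatSet B :=
  ext fun p => p.2.1.inter_mem_iff hA hB

theorem isTopologicalBasis_hatSet :
    IsTopologicalBasis {U : Set (MUltra X) | ∃ A, MeasurableSet A ∧ U = hatSet A} := by
  have hbasis := isTopologicalBasis_of_subbasis_of_inter (t := inferInstance)
    (r := {U : Set (MUltra X) | ∃ A, MeasurableSet A ∧ U = hatSet A}) rfl (by
      rintro _ ⟨A, hA, rfl⟩ _ ⟨B, hB, rfl⟩
      exact ⟨A ∩ B, hA.inter hB, (hatSet_inter hA hB).symm⟩)
  rwa [insert_eq_of_mem (show univ ∈ {U : Set (MUltra X) | ∃ A, MeasurableSet A ∧ U = hatSet A}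
    from ⟨univ, MeasurableSet.univ, hatSet_univ.symm⟩)] at hbasis

theorem isOpen_hatSet (hA : MeasurableSet A) : IsOpen (hatSet A) :=
  isTopologicalBasis_hatSet.isOpen ⟨A, hA, rfl⟩

theorem exists_hatSet_subset_of_mem_nhds {S : Set (MUltra X)} {p : S} {U : Set S}
    (hU : U ∈ 𝓝 p) : ∃ A, MeasurableSet A ∧ A ∈ p.1.1 ∧ Subtype.val ⁻¹' hatSet A ⊆ U := by
  obtain ⟨V, hV, hVU⟩ := (mem_nhds_subtype S p U).1 hU
  obtain ⟨_, ⟨A, hA, rfl⟩, hpA, hAV⟩ := isTopologicalBasis_hatSet.mem_nhds_iff.1 hV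
  exact ⟨A, hA, hpA, (preimage_mono hAV).trans hVU⟩

theorem isMFilter_setOf_diff_finite (hD : D.Infinite) :
    IsMFilter {C : Set X | MeasurableSet C ∧ (D \ C).Finite} := by
  refine ⟨fun C hC => hC.1, fun h => hD (by simpa using h.2), ⟨MeasurableSet.univ, by simp⟩, ?_, ?_⟩
  · rintro B ⟨-, hB⟩ C hC hBC
    exact ⟨hC, hB.subset (sdiff_subset_sdiff_right hBC)⟩
  · rintro B ⟨hBm, hB⟩ C ⟨hCm, hC⟩
    exact ⟨hBm.inter hCm, (hB.union hC).subset sdiff_inter.le⟩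

theorem MUltra.exists_notMem_range_princ_and_mem [MeasurableSingletonClass X]
    (hDm : MeasurableSet D) (hD : D.Infinite) : ∃ q : MUltra X, q ∉ range princ ∧ D ∈ q.1 := by
  obtain ⟨q, hq, hsub⟩ := (isMFilter_setOf_diff_finite hD).exists_isMUltrafilter_superset
  refine ⟨⟨q, hq⟩, ?_, hsub ⟨hDm, by simp⟩⟩
  rintro ⟨x, hx⟩
  have hxc : {x}ᶜ ∈ (princ x).1 := by
    rw [hx]
    exact hsub ⟨(measurableSet_singleton x).compl,
      (finite_singleton x).subset fun _ hy => not_not.1 hy.2⟩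
  exact hxc.2 rfl

theorem MUltra.mem_of_diff_finite [MeasurableSingletonClass X] {q : MUltra X}
    (hq : q ∉ range princ) (hD : D ∈ q.1) (hB : MeasurableSet B) (hDB : (D \ B).Finite) : B ∈ q.1 :=
  (q.2.mem_or_compl_mem hB).resolve_right fun hBc =>
    infinite_of_mem hq (q.2.1.inter_mem hD hBc) hDB

end MUltra

theorem exists_injective_forall_mem_of_antitone {X : Type*} {B : ℕ → Set X} (hB : Antitone B)
    (hinf : ∀ n, (B n).Infinite) : ∃ f : ℕ → X, Injective f ∧ ∀ n, f n ∈ B n := by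
  classical
  -- Pairs `(kₙ, xₙ)` with distinct `xₙ ∈ B kₙ` and strictly increasing `kₙ`, so `B kₙ ⊆ B n`.
  obtain ⟨g, hgB, hg⟩ := exists_seq_of_forall_finset_exists (fun y : ℕ × X => y.2 ∈ B y.1)
    (fun y z => y.1 < z.1 ∧ y.2 ≠ z.2) fun s _ => by
      obtain ⟨x, hxB, hxs⟩ :=
        ((hinf (s.sup Prod.fst + 1)).sdiff (s.image Prod.snd).finite_toSet).nonempty
      refine ⟨(s.sup Prod.fst + 1, x), hxB, fun y hy => ⟨Nat.lt_succ_of_le (s.le_sup hy), ?_⟩⟩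
      rintro rfl
      exact hxs (Finset.mem_image_of_mem _ hy)
  have hmono : StrictMono fun n => (g n).1 := fun m n h => (hg m n h).1
  refine ⟨fun n => (g n).2, fun m n h => ?_, fun n => hB (hmono.id_le n) (hgB n)⟩
  by_contra hmn
  rcases lt_or_gt_of_ne hmn with hlt | hlt
  exacts [(hg m n hlt).2 h, (hg n m hlt).2 h.symm]

theorem exists_countable_infinite_forall_diff_finite {X : Type*} {B : ℕ → Set X}
    (hB : Antitone B) (hinf : ∀ n, (B n).Infinite) :
    ∃ D : Set X, D.Countable ∧ D.Infinite ∧ ∀ n, (D \ B n).Finite := by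
  obtain ⟨f, hf, hfB⟩ := exists_injective_forall_mem_of_antitone hB hinf
  refine ⟨range f, countable_range f, infinite_range_of_injective hf, fun n => ?_⟩
  refine ((finite_Iio n).image f).subset ?_
  rintro _ ⟨⟨m, rfl⟩, hm⟩
  exact ⟨m, not_le.1 fun hnm => hm (hB hnm (hfB m)), rfl⟩

theorem stmt15_general {X : Type*} [MeasurableSpace X]
    (hfin : ∀ F : Set X, F.Finite → MeasurableSet F)
    (G : Set ↥((Set.range (princ : X → MUltra X))ᶜ))
    (hG : IsGδ G) (hne : G.Nonempty) :
    (interior G).Nonempty := by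
  have : MeasurableSingletonClass X := ⟨fun x => hfin {x} (finite_singleton x)⟩
  obtain ⟨p, hpG⟩ := hne
  obtain ⟨U, hUopen, rfl⟩ := isGδ_iff_eq_iInter_nat.mp hG
  choose A hAm hAp hAU using fun n =>
    exists_hatSet_subset_of_mem_nhds ((hUopen n).mem_nhds (mem_iInter.mp hpG n))
  set B : ℕ → Set X := fun n => ⋂ k ≤ n, A k
  have hBm (n : ℕ) : MeasurableSet (B n) := .biInter (to_countable _) fun k _ => hAm k
  have hBinf (n : ℕ) : (B n).Infinite :=
    MUltra.infinite_of_mem p.2 (p.1.2.1.biInter_mem (finite_Iic n) fun k _ => hAp k)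
  have hBanti : Antitone B := fun m n h => biInter_subset_biInter_left (Iic_subset_Iic.2 h)
  obtain ⟨D, hDc, hDinf, hDB⟩ := exists_countable_infinite_forall_diff_finite hBanti hBinf
  obtain ⟨q, hq, hDq⟩ := MUltra.exists_notMem_range_princ_and_mem hDc.measurableSet hDinf
  refine ⟨⟨q, hq⟩, interior_maximal (fun r hDr => mem_iInter.2 fun n => hAU n ?_)
    ((isOpen_hatSet hDc.measurableSet).preimage continuous_subtype_val) hDq⟩
  exact r.1.2.1.mem_of_superset (MUltra.mem_of_diff_finite r.2 hDr (hBm n) (hDB n)) (hAm n)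
    (biInter_subset_of_mem self_mem_Iic)

theorem stmt15 {X : Type*} [MeasurableSpace X] [Infinite X]
    (hfin : ∀ F : Set X, F.Finite → MeasurableSet F)
    (G : Set ↥((Set.range (princ : X → MUltra X))ᶜ))
    (hG : IsGδ G) (hne : G.Nonempty) :
    (interior G).Nonempty :=
  stmt15_general hfin G hG hne
end
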